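/- arXiv:2311.13738 — 3 statements merged into one kernel-verified Lean document; each statement's English description precedes it below -/
import Mathlib

section
/- Inductive backpropagation claim: Let δ ∈ (0, 1/(16K²)) and let (y,z) ∈ [0,1]^{3n−4} be a KKT point of the polynomial p constructed from the truncated-linear program. For i ∈ {2,…,n}, let ε_i := (2Kδ)^{n−i}, and let f_i^π : ℝ^i → ℝ be the function computed by the gates i+1, …, n of the program perturbed by π ∈ ℝ^{n−2}, on inputs x₁, …, x_i (i.e., v_j = x_j for j ≤ i and v_m = trunc(Σ_{j<m} a_{mj} v_j + c_m + π_m) for m = i+1, …, n, with output v_n). Then there exist π ∈ ℝ^{n−2} with |π_i| ≤ 4K·(2Kδ)^{n+1−i} for each i ∈ {3,…,n}, and λ ∈ [0,1]^{n−2}, such that for every i ∈ {2,…,n}: (1) for every sign vector s ∈ {+1,−1}^{n−2} (with s·π the coordinate-wise product), f_i^{s·π} is differentiable on the box Π_{j≤i}[y_j − ε_i, y_j + ε_i] and its gradient is constant on that box; and (2) for every k ≤ i: ∂p_i/∂y_k(y,z) = δ^{n+1} · Σ_{s : s_j = 1 for all j ≤ i} (Π_{j=i+1}^n λ_{s_j·j})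 · ∂f_i^{s·π}/∂x_k(y₁, …, y_i), where λ_{+j} := λ_j and λ_{−j} := 1 − λ_j. -/
/-!
At a KKT point the conditions on `z⁺_l, z⁻_l` and `y_l` say that the residual of gate `l` is
`y_l − trunc I_l` and that `y_l = trunc (I_l − G_l)`, where `I_l` is the input of gate `l` and
`G_l = (∂p_l/∂y_l) / (2δ^l)`. Hence `∂p_{l-1}/∂y_k = ∂p_l/∂y_k + μ_l (∂p_l/∂y_l) a_{lk}`, where
`μ_l ∈ [0, 1]` is a difference quotient of `trunc` over `[I_l − G_l, I_l]`; downward induction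
gives `Σ_k |∂p_i/∂y_k| ≤ δ^{n+1} K^{n-i}`, so `G_l` is tiny. A perturbation `±π_l` of size
`O(|G_l|)` moves the gate input into windows on which `trunc` is affine, with slopes `σ±` such
that `μ_l = λ_l σ₊ + (1 − λ_l) σ₋`. Backpropagating through the gates, every `f_i^{s·π}` is then
affine on the box around `y`, and `∇p_i` is the `λ`-weighted average of their gradients.
-/

noncomputable section

/-- Truncation to the unit interval. -/
def trunc (z : ℝ) : ℝ := min 1 (max 0 z)

/-- Value `v_m` of variable `m` of the truncated-linear program with coefficients `a`, `c`,
perturbed by `π`, where variables with index `≤ i` are treated as inputs given by `x` and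
`v_m = trunc(Σ_{1 ≤ j < m} a_{mj} v_j + c_m + π_m)` for the remaining variables. -/
def circVal (a : ℕ → ℕ → ℝ) (c π : ℕ → ℝ) (i : ℕ) (x : ℕ → ℝ) (m : ℕ) : ℝ :=
  if m ≤ i then x m
  else
    trunc ((∑ j ∈ (Finset.Ico 1 m).attach, a m j.1 * circVal a c π i x j.1) + c m + π m)
termination_by m
decreasing_by exact (Finset.mem_Ico.mp j.2).2

/-- The function `f^π : ℝ² → ℝ` computed by the program perturbed by `π`
(inputs `v₁ = x₁`, `v₂ = x₂`, output `v_n`). -/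
def progFun (a : ℕ → ℕ → ℝ) (c π : ℕ → ℝ) (n : ℕ) : ℝ × ℝ → ℝ :=
  fun x => circVal a c π 2 (fun j => if j ≤ 1 then x.1 else x.2) n

/-- The gradient of `f^π` at `w`, as a vector in `ℝ²`. -/
def progGrad (a : ℕ → ℕ → ℝ) (c π : ℕ → ℝ) (n : ℕ) (w : ℝ × ℝ) : ℝ × ℝ :=
  (fderiv ℝ (progFun a c π n) w (1, 0), fderiv ℝ (progFun a c π n) w (0, 1))

/-- The `δ`-generalized circuit gradient of the program at `w`: the convex hull of the
gradients at `w` of the functions computed by all `δ`-perturbations of the program that are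
differentiable at `w`. -/
def genGrad (a : ℕ → ℕ → ℝ) (c : ℕ → ℝ) (n : ℕ) (δ : ℝ) (w : ℝ × ℝ) : Set (ℝ × ℝ) :=
  convexHull ℝ {u | ∃ π : ℕ → ℝ, (∀ i, 3 ≤ i → i ≤ n → |π i| ≤ δ) ∧
    DifferentiableAt ℝ (progFun a c π n) w ∧ u = progGrad a c π n w}

/-- The term `q_i` of the quadratic polynomial, implementing the `i`-th gate. -/
def qval (K : ℝ) (a : ℕ → ℕ → ℝ) (c : ℕ → ℝ) (i : ℕ) (y zp zm : ℕ → ℝ) : ℝ :=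
  (y i + K * zp i - K * zm i - (∑ j ∈ Finset.Ico 1 i, a i j * y j) - c i) ^ 2
    + 2 * K ^ 2 * zp i * zm i + 2 * K * zp i * (1 - y i) + 2 * K * zm i * y i

/-- The quadratic polynomial `p(y,z) = δ^{n+1} y_n + Σ_{i=3}^n δ^i q_i(y,z)`. -/
def pval (n : ℕ) (K δ : ℝ) (a : ℕ → ℕ → ℝ) (c : ℕ → ℝ) (y zp zm : ℕ → ℝ) : ℝ :=
  δ ^ (n + 1) * y n + ∑ i ∈ Finset.Icc 3 n, δ ^ i * qval K a c i y zp zm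

/-- The partial derivative `∂p/∂y_k`. -/
def dpy (n : ℕ) (K δ : ℝ) (a : ℕ → ℕ → ℝ) (c : ℕ → ℝ) (k : ℕ) (y zp zm : ℕ → ℝ) : ℝ :=
  deriv (fun t => pval n K δ a c (Function.update y k t) zp zm) (y k)

/-- The partial derivative `∂p/∂z_k⁺`. -/
def dpzp (n : ℕ) (K δ : ℝ) (a : ℕ → ℕ → ℝ) (c : ℕ → ℝ) (k : ℕ) (y zp zm : ℕ → ℝ) : ℝ :=
  deriv (fun t => pval n K δ a c y (Function.update zp k t) zm) (zp k)

/-- The partial derivative `∂p/∂z_k⁻`. -/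
def dpzm (n : ℕ) (K δ : ℝ) (a : ℕ → ℕ → ℝ) (c : ℕ → ℝ) (k : ℕ) (y zp zm : ℕ → ℝ) : ℝ :=
  deriv (fun t => pval n K δ a c y zp (Function.update zm k t)) (zm k)

/-- `(y, z⁺, z⁻) ∈ [0,1]^{3n−4}` is a KKT point of the minimization of `p` over the box. -/
def IsKKT (n : ℕ) (K δ : ℝ) (a : ℕ → ℕ → ℝ) (c : ℕ → ℝ) (y zp zm : ℕ → ℝ) : Prop :=
  (∀ i, 1 ≤ i → i ≤ n → y i ∈ Set.Icc (0 : ℝ) 1) ∧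
  (∀ i, 3 ≤ i → i ≤ n → zp i ∈ Set.Icc (0 : ℝ) 1 ∧ zm i ∈ Set.Icc (0 : ℝ) 1) ∧
  (∀ i, 1 ≤ i → i ≤ n →
    (0 < y i → dpy n K δ a c i y zp zm ≤ 0) ∧ (y i < 1 → 0 ≤ dpy n K δ a c i y zp zm)) ∧
  (∀ i, 3 ≤ i → i ≤ n →
    ((0 < zp i → dpzp n K δ a c i y zp zm ≤ 0) ∧ (zp i < 1 → 0 ≤ dpzp n K δ a c i y zp zm)) ∧
    ((0 < zm i → dpzm n K δ a c i y zp zm ≤ 0) ∧ (zm i < 1 → 0 ≤ dpzm n K δ a c i y zp zm)))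

/-- The tail polynomial `p_i(y,z) = δ^{n+1} y_n + Σ_{ℓ=i+1}^n δ^ℓ q_ℓ(y,z)`. -/
def pival (n : ℕ) (K δ : ℝ) (a : ℕ → ℕ → ℝ) (c : ℕ → ℝ) (i : ℕ) (y zp zm : ℕ → ℝ) : ℝ :=
  δ ^ (n + 1) * y n + ∑ l ∈ Finset.Icc (i + 1) n, δ ^ l * qval K a c l y zp zm

/-- The partial derivative `∂p_i/∂y_k`. -/
def dpiy (n : ℕ) (K δ : ℝ) (a : ℕ → ℕ → ℝ) (c : ℕ → ℝ) (i k : ℕ) (y zp zm : ℕ → ℝ) : ℝ :=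
  deriv (fun t => pival n K δ a c i (Function.update y k t) zp zm) (y k)

/-- The coordinate-wise product `s · π` of a sign vector with a perturbation vector, where
the sign vector is encoded by the set `T` of indices carrying sign `+1`. -/
def signed (π : ℕ → ℝ) (T : Finset ℕ) : ℕ → ℝ :=
  fun j => if j ∈ T then π j else -π j

/-- The coordinate-wise product `s · π` for a sign vector that is `+1` on all indices
`j ≤ i`, and on indices `j > i` is `+1` exactly on `T`. -/
def signedAbove (i : ℕ) (π : ℕ → ℝ) (T : Finset ℕ) : ℕ → ℝ :=
  fun j => if j ≤ i ∨ j ∈ T then π j else -π j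

/-- The function `f_i^π : ℝ^i → ℝ` computed by gates `i+1, …, n` of the perturbed program,
on inputs `x₁, …, x_i` (coordinate `j : Fin i` of the argument is the input `x_{j+1}`). -/
def progFunFrom (a : ℕ → ℕ → ℝ) (c π : ℕ → ℝ) (i n : ℕ) : (Fin i → ℝ) → ℝ :=
  fun v =>
    circVal a c π i (fun m => if h : 1 ≤ m ∧ m ≤ i then v ⟨m - 1, by omega⟩ else 0) n

open Finset

theorem trunc_of_mem_Icc {z : ℝ} (h : z ∈ Set.Icc 0 1) : trunc z = z := by
  rw [trunc, max_eq_right h.1, min_eq_right h.2]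

theorem trunc_of_nonpos {z : ℝ} (h : z ≤ 0) : trunc z = 0 := by
  rw [trunc, max_eq_left h, min_eq_right zero_le_one]

theorem trunc_of_one_le {z : ℝ} (h : 1 ≤ z) : trunc z = 1 := by
  rw [trunc, min_eq_left (le_max_of_le_right h)]

theorem trunc_mono : Monotone trunc := fun _ _ h => min_le_min_left 1 (max_le_max_left 0 h)

theorem abs_trunc_sub_trunc_le (x x' : ℝ) : |trunc x - trunc x'| ≤ |x - x'| := by
  calc |trunc x - trunc x'| ≤ max |1 - 1| |max 0 x - max 0 x'| := abs_min_sub_min_le_max _ _ _ _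
    _ = |max x 0 - max x' 0| := by rw [sub_self, abs_zero, max_comm 0 x, max_comm 0 x',
          max_eq_right (abs_nonneg _)]
    _ ≤ |x - x'| := abs_max_sub_max_le_abs _ _ _

theorem trunc_eq_sub_max_add_max (x : ℝ) : trunc x = x - max (x - 1) 0 + max (-x) 0 := by
  rcases le_total x 0 with h0 | h0
  · rw [trunc_of_nonpos h0, max_eq_right (by linarith), max_eq_left (by linarith)]; ring
  rcases le_total x 1 with h1 | h1
  · rw [trunc_of_mem_Icc ⟨h0, h1⟩, max_eq_right (by linarith), max_eq_right (by linarith)]; ring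
  · rw [trunc_of_one_le h1, max_eq_left (by linarith), max_eq_right (by linarith)]; ring

theorem exists_mem_Icc_trunc_sub_eq (x x' : ℝ) :
    ∃ μ ∈ Set.Icc (0 : ℝ) 1, trunc x - trunc x' = μ * (x - x') := by
  wlog h : x' ≤ x generalizing x x'
  · obtain ⟨μ, hμ, he⟩ := this x' x (le_of_not_ge h)
    exact ⟨μ, hμ, by linarith⟩
  rcases h.eq_or_lt with rfl | hlt
  · exact ⟨0, ⟨le_rfl, zero_le_one⟩, by simp⟩
  have hle : trunc x - trunc x' ≤ x - x' :=
    (le_abs_self _).trans ((abs_trunc_sub_trunc_le x x').trans (abs_of_pos (sub_pos.2 hlt)).le)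
  refine ⟨(trunc x - trunc x') / (x - x'),
    ⟨div_nonneg (sub_nonneg.2 (trunc_mono h)) (sub_pos.2 hlt).le,
      div_le_one_of_le₀ hle (sub_pos.2 hlt).le⟩, ?_⟩
  field_simp [(sub_pos.2 hlt).ne']

theorem eq_trunc_of_kkt {w x c : ℝ} (hc : 0 < c) (hw : w ∈ Set.Icc 0 1)
    (h0 : 0 < w → c * (w - x) ≤ 0) (h1 : w < 1 → 0 ≤ c * (w - x)) : w = trunc x := by
  have h0 : 0 < w → w ≤ x := fun h => sub_nonpos.1 (nonpos_of_mul_nonpos_right (h0 h) hc)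
  have h1 : w < 1 → x ≤ w := fun h => sub_nonneg.1 (nonneg_of_mul_nonneg_right (h1 h) hc)
  rcases hw.1.eq_or_lt with rfl | hw0
  · exact (trunc_of_nonpos (h1 zero_lt_one)).symm
  rcases hw.2.eq_or_lt with rfl | hw1
  · exact (trunc_of_one_le (h0 hw0)).symm
  have hx := le_antisymm (h1 hw1) (h0 hw0)
  rw [hx, trunc_of_mem_Icc ⟨hw0.le, hw1.le⟩]

theorem mul_eq_max_of_kkt {z x K c : ℝ} (hc : 0 < c) (hK : 0 ≤ K) (hz : z ∈ Set.Icc 0 1)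
    (hx : x ≤ K) (h0 : 0 < z → c * (K * z - x) ≤ 0) (h1 : z < 1 → 0 ≤ c * (K * z - x)) :
    K * z = max x 0 := by
  have h0 : 0 < z → K * z ≤ x := fun h => sub_nonpos.1 (nonpos_of_mul_nonpos_right (h0 h) hc)
  have h1 : z < 1 → x ≤ K * z := fun h => sub_nonneg.1 (nonneg_of_mul_nonneg_right (h1 h) hc)
  rcases hz.1.eq_or_lt with rfl | hz0
  · rw [mul_zero, max_eq_right (by simpa using h1 zero_lt_one)]
  have hKz : 0 ≤ K * z := mul_nonneg hK hz0.le
  rcases hz.2.eq_or_lt with rfl | hz1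
  · rw [mul_one, le_antisymm hx (by simpa using h0 hz0), max_eq_left hK]
  rw [max_eq_left (hKz.trans (h0 hz0)), le_antisymm (h0 hz0) (h1 hz1)]

def TruncWindow (x ρ σ y r : ℝ) : Prop :=
  ∃ b, ∀ z ∈ Set.Icc (x - ρ) (x + ρ), trunc z = σ * z + b ∧ |trunc z - y| ≤ r

theorem truncWindow_of_affine {x x₀ ρ σ b r : ℝ}
    (hb : ∀ z ∈ Set.Icc (x - ρ) (x + ρ), trunc z = σ * z + b) (hr : |x - x₀| + ρ ≤ r) :
    TruncWindow x ρ σ (trunc x₀) r := by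
  refine ⟨b, fun z hz => ⟨hb z hz, (abs_trunc_sub_trunc_le _ _).trans ?_⟩⟩
  exact abs_le.2 ⟨by linarith [hz.1, neg_abs_le (x - x₀)], by linarith [hz.2, le_abs_self (x - x₀)]⟩

/-- Near a kink of `trunc`, `p` is chosen so that the windows around `x + p` and `x - p` lie on
opposite sides of it. -/
theorem exists_trunc_affine_pair {x h ρ : ℝ} (hρ : 4 * ρ ≤ 1) (hh : |h| ≤ ρ) :
    ∃ p lam σp σm bp bm : ℝ, |p| ≤ 2 * ρ ∧ lam ∈ Set.Icc (0 : ℝ) 1 ∧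
      (∀ z ∈ Set.Icc (x + p - ρ) (x + p + ρ), trunc z = σp * z + bp) ∧
      (∀ z ∈ Set.Icc (x - p - ρ) (x - p + ρ), trunc z = σm * z + bm) ∧
      trunc x - trunc (x - h) = (lam * σp + (1 - lam) * σm) * h := by
  obtain ⟨hh₁, hh₂⟩ := abs_le.1 hh
  have zero : ∀ z ≤ 0, trunc z = 0 * z + 0 := fun z hz => by rw [trunc_of_nonpos hz]; ring
  have one : ∀ z, 1 ≤ z → trunc z = 0 * z + 1 := fun z hz => by rw [trunc_of_one_le hz]; ring
  have ident : ∀ z ∈ Set.Icc (0 : ℝ) 1, trunc z = 1 * z + 0 := fun z hz => by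
    rw [trunc_of_mem_Icc hz]; ring
  have hp0 : |(0 : ℝ)| ≤ 2 * ρ := by rw [abs_zero]; linarith
  have hp2 : |2 * ρ| ≤ 2 * ρ := (abs_of_nonneg (by linarith)).le
  obtain ⟨μ, hμ, hμx⟩ := exists_mem_Icc_trunc_sub_eq x (x - h)
  rw [sub_sub_cancel] at hμx
  rcases lt_or_ge x (-ρ) with hx | hx
  · refine ⟨0, 0, 0, 0, 0, 0, hp0, ⟨le_rfl, zero_le_one⟩,
      fun z hz => zero z (by linarith [hz.2]), fun z hz => zero z (by linarith [hz.2]), ?_⟩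
    rw [trunc_of_nonpos (by linarith), trunc_of_nonpos (by linarith)]; ring
  rcases le_or_gt x ρ with hx' | hx'
  · refine ⟨2 * ρ, μ, 1, 0, 0, 0, hp2, hμ,
      fun z hz => ident z ⟨by linarith [hz.1], by linarith [hz.2]⟩,
      fun z hz => zero z (by linarith [hz.2]), by rw [hμx]; ring⟩
  rcases lt_or_ge x (1 - ρ) with hx'' | hx''
  · refine ⟨0, 1, 1, 1, 0, 0, hp0, ⟨zero_le_one, le_rfl⟩,
      fun z hz => ident z ⟨by linarith [hz.1], by linarith [hz.2]⟩,
      fun z hz => ident z ⟨by linarith [hz.1], by linarith [hz.2]⟩, ?_⟩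
    rw [trunc_of_mem_Icc ⟨by linarith, by linarith⟩, trunc_of_mem_Icc ⟨by linarith, by linarith⟩]
    ring
  rcases le_or_gt x (1 + ρ) with hx''' | hx'''
  · refine ⟨-(2 * ρ), μ, 1, 0, 0, 1, by rwa [abs_neg], hμ,
      fun z hz => ident z ⟨by linarith [hz.1], by linarith [hz.2]⟩,
      fun z hz => one z (by linarith [hz.1]), by rw [hμx]; ring⟩
  · refine ⟨0, 0, 0, 0, 1, 1, hp0, ⟨le_rfl, zero_le_one⟩,
      fun z hz => one z (by linarith [hz.1]), fun z hz => one z (by linarith [hz.1]), ?_⟩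
    rw [trunc_of_one_le (by linarith), trunc_of_one_le (by linarith)]; ring

theorem exists_truncWindow_pair {x h ρ r : ℝ} (hρ : 4 * ρ ≤ 1) (hh : |h| ≤ ρ)
    (hr : 4 * ρ ≤ r) :
    ∃ p lam σp σm : ℝ, |p| ≤ 2 * ρ ∧ lam ∈ Set.Icc (0 : ℝ) 1 ∧
      TruncWindow (x + p) ρ σp (trunc (x - h)) r ∧ TruncWindow (x - p) ρ σm (trunc (x - h)) r ∧
      trunc x - trunc (x - h) = (lam * σp + (1 - lam) * σm) * h := by
  obtain ⟨p, lam, σp, σm, bp, bm, hp, hlam, hbp, hbm, hμ⟩ := exists_trunc_affine_pair (x := x) hρ hh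
  have hd : ∀ s : ℝ, |s| ≤ 2 * ρ → |x + s - (x - h)| + ρ ≤ r := fun s hs => by
    rw [show x + s - (x - h) = s + h by ring]
    linarith [abs_add_le s h]
  refine ⟨p, lam, σp, σm, hp, hlam, truncWindow_of_affine hbp (hd p hp),
    truncWindow_of_affine hbm ?_, hμ⟩
  simpa [sub_eq_add_neg] using hd (-p) (by rwa [abs_neg])

def gateInput (a : ℕ → ℕ → ℝ) (c x : ℕ → ℝ) (m : ℕ) : ℝ :=
  (∑ j ∈ Ico 1 m, a m j * x j) + c m

theorem gateInput_congr {a : ℕ → ℕ → ℝ} {c x x' : ℕ → ℝ} {m : ℕ}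
    (h : ∀ j ∈ Ico 1 m, x j = x' j) : gateInput a c x m = gateInput a c x' m := by
  rw [gateInput, gateInput, sum_congr rfl fun j hj => by rw [h j hj]]

theorem abs_sum_mul_le {ι : Type*} {s : Finset ι} {f x : ι → ℝ} {B : ℝ}
    (hx : ∀ j ∈ s, |x j| ≤ B) :
    |∑ j ∈ s, f j * x j| ≤ (∑ j ∈ s, |f j|) * B := by
  rw [sum_mul]
  refine (abs_sum_le_sum_abs _ _).trans (sum_le_sum fun j hj => ?_)
  rw [abs_mul]
  exact mul_le_mul_of_nonneg_left (hx j hj) (abs_nonneg _)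

theorem abs_gateInput_le {a : ℕ → ℕ → ℝ} {c x : ℕ → ℝ} {m : ℕ} {K : ℝ}
    (hK : (∑ j ∈ Ico 1 m, |a m j|) + |c m| ≤ K) (hx : ∀ j ∈ Ico 1 m, |x j| ≤ 1) :
    |gateInput a c x m| ≤ K := by
  have := abs_sum_mul_le (f := a m) hx
  rw [mul_one] at this
  exact (abs_add_le _ _).trans (by linarith)

theorem abs_gateInput_sub_le {a : ℕ → ℕ → ℝ} {c x y : ℕ → ℝ} {m : ℕ} {K ρ : ℝ}
    (hK : ∑ j ∈ Ico 1 m, |a m j| ≤ K) (hρ : 0 ≤ ρ) (hx : ∀ j ∈ Ico 1 m, |x j - y j| ≤ ρ) :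
    |gateInput a c x m - gateInput a c y m| ≤ K * ρ := by
  have h := abs_sum_mul_le (f := a m) hx
  simp only [mul_sub, sum_sub_distrib] at h
  calc |gateInput a c x m - gateInput a c y m|
      = |∑ j ∈ Ico 1 m, a m j * x j - ∑ j ∈ Ico 1 m, a m j * y j| := by
        rw [gateInput, gateInput, add_sub_add_right_eq_sub]
    _ ≤ K * ρ := h.trans (mul_le_mul_of_nonneg_right hK hρ)

section Circuit

variable {a : ℕ → ℕ → ℝ} {c π : ℕ → ℝ} {i n : ℕ}

theorem circVal_of_le {x : ℕ → ℝ} {m : ℕ} (h : m ≤ i) : circVal a c π i x m = x m := by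
  rw [circVal, if_pos h]

theorem circVal_of_lt {x : ℕ → ℝ} {m : ℕ} (h : i < m) :
    circVal a c π i x m = trunc (gateInput a c (circVal a c π i x) m + π m) := by
  rw [circVal, if_neg (not_le.2 h), gateInput,
    ← sum_attach (Ico 1 m) fun j => a m j * circVal a c π i x j]

theorem circVal_congr_perturbation {π' : ℕ → ℝ} (hπ : ∀ m, i < m → π m = π' m) (x : ℕ → ℝ) :
    circVal a c π i x = circVal a c π' i x := by
  funext m
  induction m using Nat.strong_induction_on with
  | _ m ih =>
    rcases le_or_gt m i with h | h
    · rw [circVal_of_le h, circVal_of_le h]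
    · rw [circVal_of_lt h, circVal_of_lt h, hπ m h,
        gateInput_congr fun j hj => ih j (mem_Ico.1 hj).2]

theorem circVal_eq_circVal_succ (x : ℕ → ℝ) (m : ℕ) :
    circVal a c π i x m = circVal a c π (i + 1)
      (Function.update x (i + 1) (trunc (gateInput a c x (i + 1) + π (i + 1)))) m := by
  induction m using Nat.strong_induction_on with
  | _ m ih =>
    rcases lt_trichotomy m (i + 1) with h | rfl | h
    · rw [circVal_of_le (by omega), circVal_of_le (by omega),
        Function.update_of_ne (by omega)]
    · rw [circVal_of_lt (by omega), circVal_of_le le_rfl, Function.update_self,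
        gateInput_congr fun j hj => circVal_of_le (by simp at hj; omega)]
    · rw [circVal_of_lt (by omega), circVal_of_lt h,
        gateInput_congr fun j hj => ih j (mem_Ico.1 hj).2]

def CircAffineOn (a : ℕ → ℕ → ℝ) (c π : ℕ → ℝ) (i n : ℕ) (y : ℕ → ℝ) (ρ : ℝ) (g : ℕ → ℝ) :
    Prop :=
  ∃ b, ∀ x : ℕ → ℝ, (∀ j ∈ Icc 1 i, |x j - y j| ≤ ρ) →
    circVal a c π i x n = (∑ j ∈ Icc 1 i, g j * x j) + b

variable {y g : ℕ → ℝ} {ρ : ℝ}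

theorem circAffineOn_self (hn : 1 ≤ n) :
    CircAffineOn a c π n n y ρ fun j => if j = n then 1 else 0 := by
  refine ⟨0, fun x _ => ?_⟩
  simp [circVal_of_le le_rfl, ite_mul, sum_ite_eq', hn]

theorem CircAffineOn.congr_perturbation {π' : ℕ → ℝ} (h : CircAffineOn a c π i n y ρ g)
    (hπ : ∀ m, i < m → π m = π' m) : CircAffineOn a c π' i n y ρ g := by
  simpa only [CircAffineOn, circVal_congr_perturbation hπ] using h

theorem CircAffineOn.of_succ {K ρ' σ : ℝ} (h : CircAffineOn a c π (i + 1) n y ρ' g)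
    (hK : ∑ j ∈ Ico 1 (i + 1), |a (i + 1) j| ≤ K) (hρ : 0 ≤ ρ) (hρρ' : ρ ≤ ρ')
    (hwin : TruncWindow (gateInput a c y (i + 1) + π (i + 1)) (K * ρ) σ (y (i + 1)) ρ') :
    CircAffineOn a c π i n y ρ fun j => g j + g (i + 1) * σ * a (i + 1) j := by
  obtain ⟨b, hb⟩ := h
  obtain ⟨β, hβ⟩ := hwin
  refine ⟨b + g (i + 1) * (σ * (c (i + 1) + π (i + 1)) + β), fun x hx => ?_⟩
  have hI := abs_le.1 <| abs_gateInput_sub_le (c := c) hK hρ fun j hj =>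
    hx j (by rw [← Ico_add_one_right_eq_Icc]; exact hj)
  obtain ⟨hV, hVy⟩ := hβ (gateInput a c x (i + 1) + π (i + 1))
    ⟨by linarith [hI.1], by linarith [hI.2]⟩
  have hx' : ∀ j ∈ Icc 1 (i + 1), |Function.update x (i + 1)
      (trunc (gateInput a c x (i + 1) + π (i + 1))) j - y j| ≤ ρ' := by
    intro j hj
    rcases eq_or_ne j (i + 1) with rfl | hne
    · rwa [Function.update_self]
    · rw [Function.update_of_ne hne]
      exact (hx j (by simp at hj ⊢; omega)).trans hρρ'
  have hrest : ∑ j ∈ Icc 1 i, g j * Function.update x (i + 1)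
      (trunc (gateInput a c x (i + 1) + π (i + 1))) j = ∑ j ∈ Icc 1 i, g j * x j :=
    sum_congr rfl fun j hj => by rw [Function.update_of_ne (by simp at hj; omega)]
  have hlin : ∑ j ∈ Icc 1 i, (g j + g (i + 1) * σ * a (i + 1) j) * x j
      = (∑ j ∈ Icc 1 i, g j * x j) + g (i + 1) * σ * ∑ j ∈ Ico 1 (i + 1), a (i + 1) j * x j := by
    rw [Ico_add_one_right_eq_Icc, mul_sum, ← sum_add_distrib]
    exact sum_congr rfl fun j _ => by ring
  rw [circVal_eq_circVal_succ, hb _ hx', ← insert_Icc_right_eq_Icc_add_one (by omega),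
    sum_insert (by simp), Function.update_self, hrest, hlin, hV, gateInput]
  ring

theorem sum_Icc_one_eq_sum_fin {M : Type*} [AddCommMonoid M] (f : ℕ → M) (i : ℕ) :
    ∑ j ∈ Icc 1 i, f j = ∑ j : Fin i, f (j + 1) := by
  rw [Fin.sum_univ_eq_sum_range (fun j => f (j + 1)), range_eq_Ico, sum_Ico_add' f 0 i 1,
    zero_add, Ico_add_one_right_eq_Icc]

theorem CircAffineOn.hasFDerivAt_progFunFrom (h : CircAffineOn a c π i n y ρ g)
    {v : Fin i → ℝ} (hv : ∀ j : Fin i, |v j - y (j + 1)| < ρ) :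
    HasFDerivAt (progFunFrom a c π i n)
      (∑ j : Fin i, g (j + 1) • (ContinuousLinearMap.proj j : (Fin i → ℝ) →L[ℝ] ℝ)) v := by
  obtain ⟨b, hb⟩ := h
  set L := ∑ j : Fin i, g (j + 1) • (ContinuousLinearMap.proj j : (Fin i → ℝ) →L[ℝ] ℝ)
  have hU : IsOpen (⋂ j : Fin i, {w : Fin i → ℝ | |w j - y (j + 1)| < ρ}) :=
    isOpen_iInter_of_finite fun j => isOpen_lt (by fun_prop) continuous_const
  refine (L.hasFDerivAt.add_const b).congr_of_eventuallyEq <|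
    Filter.mem_of_superset (hU.mem_nhds (Set.mem_iInter.2 hv)) fun w hw => ?_
  rw [Set.mem_iInter] at hw
  have hbox : ∀ j ∈ Icc 1 i,
      |(fun m => if h : 1 ≤ m ∧ m ≤ i then w ⟨m - 1, by omega⟩ else 0) j - y j| ≤ ρ := by
    intro j hj
    obtain ⟨h1, h2⟩ := mem_Icc.1 hj
    have := hw ⟨j - 1, by omega⟩
    simp only [Set.mem_ofPred_eq, Nat.sub_add_cancel h1] at this
    simpa [h1, h2] using this.le
  change circVal a c π i _ n = L w + b
  rw [hb _ hbox, sum_Icc_one_eq_sum_fin]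
  simp [L]

theorem CircAffineOn.fderiv_progFunFrom_eq (h : CircAffineOn a c π i n y ρ g) (hρ : 0 < ρ)
    {v : Fin i → ℝ} (hv : ∀ j : Fin i, |v j - y (j + 1)| < ρ) :
    DifferentiableAt ℝ (progFunFrom a c π i n) v ∧
      fderiv ℝ (progFunFrom a c π i n) v
        = fderiv ℝ (progFunFrom a c π i n) (fun j : Fin i => y (j + 1)) := by
  have hy := h.hasFDerivAt_progFunFrom (v := fun j : Fin i => y (j + 1)) fun j => by simpa
  have hv := h.hasFDerivAt_progFunFrom hv
  exact ⟨hv.differentiableAt, hv.fderiv.trans hy.fderiv.symm⟩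

theorem CircAffineOn.fderiv_progFunFrom_single (h : CircAffineOn a c π i n y ρ g) (hρ : 0 < ρ)
    (q : Fin i) :
    fderiv ℝ (progFunFrom a c π i n) (fun j : Fin i => y (j + 1)) (Pi.single q 1) = g (q + 1) := by
  rw [(h.hasFDerivAt_progFunFrom fun j => by simpa).fderiv]
  simp [Pi.single_apply]

end Circuit

def gateResidual (K : ℝ) (a : ℕ → ℕ → ℝ) (c : ℕ → ℝ) (m : ℕ) (y zp zm : ℕ → ℝ) : ℝ :=
  y m + K * (zp m - zm m) - gateInput a c y m

def qvalDerivY (K : ℝ) (a : ℕ → ℕ → ℝ) (c : ℕ → ℝ) (m k : ℕ) (y zp zm : ℕ → ℝ) : ℝ :=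
  (if m = k then 2 * (y m - gateInput a c y m) else 0) -
    if k ∈ Ico 1 m then 2 * gateResidual K a c m y zp zm * a m k else 0

section PartialDerivatives

variable {K δ : ℝ} {a : ℕ → ℕ → ℝ} {c : ℕ → ℝ} {n : ℕ} {y zp zm : ℕ → ℝ}

theorem qval_eq (m : ℕ) (y zp zm : ℕ → ℝ) :
    qval K a c m y zp zm = gateResidual K a c m y zp zm ^ 2 + 2 * K ^ 2 * zp m * zm m
      + 2 * K * zp m * (1 - y m) + 2 * K * zm m * y m := by
  simp only [qval, gateResidual, gateInput]
  ring

theorem hasDerivAt_gateQuadratic {Y P M I : ℝ → ℝ} {Y' P' M' I' t : ℝ} (hY : HasDerivAt Y Y' t)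
    (hP : HasDerivAt P P' t) (hM : HasDerivAt M M' t) (hI : HasDerivAt I I' t) :
    HasDerivAt (fun s => (Y s + K * (P s - M s) - I s) ^ 2 + 2 * K ^ 2 * P s * M s
        + 2 * K * P s * (1 - Y s) + 2 * K * M s * Y s)
      (2 * (Y t + K * (P t - M t) - I t) * (Y' + K * (P' - M') - I')
        + 2 * K ^ 2 * (P' * M t + P t * M') + 2 * K * (P' * (1 - Y t) - P t * Y')
        + 2 * K * (M' * Y t + M t * Y')) t := by
  have := (((((hY.fun_add ((hP.fun_sub hM).const_mul K)).fun_sub hI).fun_pow 2).fun_add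
    ((hP.const_mul (2 * K ^ 2)).fun_mul hM)).fun_add
    ((hP.const_mul (2 * K)).fun_mul (hY.const_sub 1))).fun_add ((hM.const_mul (2 * K)).fun_mul hY)
  exact this.congr_deriv (by ring)

theorem hasDerivAt_update_apply (x : ℕ → ℝ) (k m : ℕ) (t : ℝ) :
    HasDerivAt (fun s => Function.update x k s m) (if m = k then 1 else 0) t := by
  rcases eq_or_ne m k with rfl | h
  · simp only [Function.update_self]
    exact hasDerivAt_id' t
  · simpa [Function.update_of_ne h, h] using hasDerivAt_const t (x m)

theorem hasDerivAt_gateInput_update (x : ℕ → ℝ) (k m : ℕ) (t : ℝ) :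
    HasDerivAt (fun s => gateInput a c (Function.update x k s) m)
      (if k ∈ Ico 1 m then a m k else 0) t := by
  have := (HasDerivAt.fun_sum fun j (_ : j ∈ Ico 1 m) =>
    (hasDerivAt_update_apply x k j t).const_mul (a m j)).add_const (c m)
  simpa [gateInput, mul_ite, sum_ite_eq'] using this

theorem hasDerivAt_qval_update_y (m k : ℕ) :
    HasDerivAt (fun t => qval K a c m (Function.update y k t) zp zm)
      (qvalDerivY K a c m k y zp zm) (y k) := by
  simp only [qval_eq, gateResidual]
  refine (hasDerivAt_gateQuadratic (hasDerivAt_update_apply y k m _) (hasDerivAt_const _ (zp m))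
    (hasDerivAt_const _ (zm m)) (hasDerivAt_gateInput_update y k m _)).congr_deriv ?_
  simp only [Function.update_eq_self, qvalDerivY, gateResidual]
  split_ifs <;> ring

theorem hasDerivAt_qval_update_zp (m k : ℕ) :
    HasDerivAt (fun t => qval K a c m y (Function.update zp k t) zm)
      (if m = k then 2 * K * (K * zp m + 1 - gateInput a c y m) else 0) (zp k) := by
  simp only [qval_eq, gateResidual]
  refine (hasDerivAt_gateQuadratic (hasDerivAt_const _ (y m)) (hasDerivAt_update_apply zp k m _)
    (hasDerivAt_const _ (zm m)) (hasDerivAt_const _ (gateInput a c y m))).congr_deriv ?_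
  simp only [Function.update_eq_self]
  split_ifs <;> ring

theorem hasDerivAt_qval_update_zm (m k : ℕ) :
    HasDerivAt (fun t => qval K a c m y zp (Function.update zm k t))
      (if m = k then 2 * K * (K * zm m + gateInput a c y m) else 0) (zm k) := by
  simp only [qval_eq, gateResidual]
  refine (hasDerivAt_gateQuadratic (hasDerivAt_const _ (y m)) (hasDerivAt_const _ (zp m))
    (hasDerivAt_update_apply zm k m _) (hasDerivAt_const _ (gateInput a c y m))).congr_deriv ?_
  simp only [Function.update_eq_self]
  split_ifs <;> ring

theorem dpiy_eq (i k : ℕ) :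
    dpiy n K δ a c i k y zp zm = δ ^ (n + 1) * (if n = k then 1 else 0)
      + ∑ m ∈ Icc (i + 1) n, δ ^ m * qvalDerivY K a c m k y zp zm := by
  have h := ((hasDerivAt_update_apply y k n (y k)).const_mul (δ ^ (n + 1))).fun_add
    (HasDerivAt.fun_sum fun m (_ : m ∈ Icc (i + 1) n) =>
      (hasDerivAt_qval_update_y (K := K) (a := a) (c := c) (zp := zp) (zm := zm) m k).const_mul
        (δ ^ m))
  exact h.deriv

theorem dpiy_top (k : ℕ) : dpiy n K δ a c n k y zp zm = if k = n then δ ^ (n + 1) else 0 := by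
  rw [dpiy_eq, Icc_eq_empty (by omega), sum_empty, add_zero]
  split_ifs <;> simp_all [eq_comm]

theorem dpiy_eq_dpiy_succ {i k : ℕ} (hin : i < n) (hk : k ∈ Icc 1 i) :
    dpiy n K δ a c i k y zp zm = dpiy n K δ a c (i + 1) k y zp zm
      - 2 * δ ^ (i + 1) * gateResidual K a c (i + 1) y zp zm * a (i + 1) k := by
  obtain ⟨hk1, hki⟩ := mem_Icc.1 hk
  rw [dpiy_eq, dpiy_eq, ← insert_Icc_add_one_left_eq_Icc (show i + 1 ≤ n by omega),
    sum_insert (by simp), qvalDerivY, if_neg (show i + 1 ≠ k by omega),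
    if_pos (mem_Ico.2 ⟨hk1, by omega⟩)]
  ring

theorem dpy_eq_dpiy_add {l : ℕ} (hl : l ∈ Icc 3 n) :
    dpy n K δ a c l y zp zm
      = dpiy n K δ a c l l y zp zm + 2 * δ ^ l * (y l - gateInput a c y l) := by
  have hlow : ∑ m ∈ Icc l n, δ ^ m * qvalDerivY K a c m l y zp zm
      = ∑ m ∈ Icc 3 n, δ ^ m * qvalDerivY K a c m l y zp zm := by
    refine sum_subset (Icc_subset_Icc_left (mem_Icc.1 hl).1) fun m hm hml => ?_
    have : m < l := by simp at hm hml; omega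
    simp [qvalDerivY, this.ne, this.not_gt]
  change dpiy n K δ a c 2 l y zp zm = _
  rw [dpiy_eq, dpiy_eq, ← hlow, ← insert_Icc_add_one_left_eq_Icc (mem_Icc.1 hl).2,
    sum_insert (by simp), qvalDerivY, if_pos rfl, if_neg (show l ∉ Ico 1 l by simp)]
  ring

theorem dpzp_eq {k : ℕ} (hk : k ∈ Icc 3 n) :
    dpzp n K δ a c k y zp zm = 2 * K * δ ^ k * (K * zp k + 1 - gateInput a c y k) := by
  have h := (HasDerivAt.fun_sum fun m (_ : m ∈ Icc 3 n) =>
    (hasDerivAt_qval_update_zp (K := K) (a := a) (c := c) (y := y) (zp := zp) (zm := zm) m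
      k).const_mul (δ ^ m)).const_add (δ ^ (n + 1) * y n)
  refine h.deriv.trans ?_
  simp [mul_ite, sum_ite_eq', hk]
  ring

theorem dpzm_eq {k : ℕ} (hk : k ∈ Icc 3 n) :
    dpzm n K δ a c k y zp zm = 2 * K * δ ^ k * (K * zm k + gateInput a c y k) := by
  have h := (HasDerivAt.fun_sum fun m (_ : m ∈ Icc 3 n) =>
    (hasDerivAt_qval_update_zm (K := K) (a := a) (c := c) (y := y) (zp := zp) (zm := zm) m
      k).const_mul (δ ^ m)).const_add (δ ^ (n + 1) * y n)
  refine h.deriv.trans ?_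
  simp [mul_ite, sum_ite_eq', hk]
  ring

end PartialDerivatives

section KKT

variable {n : ℕ} {K δ : ℝ} {a : ℕ → ℕ → ℝ} {c : ℕ → ℝ} {y zp zm : ℕ → ℝ}

/-- The `z`-conditions force `K z⁺_l = max (I_l − 1) 0` and `K z⁻_l = max (−I_l) 0`. -/
theorem IsKKT.gate_eq (hkkt : IsKKT n K δ a c y zp zm) (hK : 0 < K) (hδ : 0 < δ) {l : ℕ}
    (hl : l ∈ Icc 3 n) (hI : |gateInput a c y l| ≤ K) :
    y l = trunc (gateInput a c y l - dpiy n K δ a c l l y zp zm / (2 * δ ^ l)) ∧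
      gateResidual K a c l y zp zm = y l - trunc (gateInput a c y l) := by
  obtain ⟨hl3, hln⟩ := mem_Icc.1 hl
  obtain ⟨hI₁, hI₂⟩ := abs_le.1 hI
  have hδl : 0 < 2 * δ ^ l := by positivity
  have hKδl : 0 < 2 * K * δ ^ l := by positivity
  obtain ⟨hzp, hzm⟩ := hkkt.2.1 l hl3 hln
  obtain ⟨⟨hzp₀, hzp₁⟩, hzm₀, hzm₁⟩ := hkkt.2.2.2 l hl3 hln
  obtain ⟨hy₀, hy₁⟩ := hkkt.2.2.1 l (by omega) hln
  rw [dpzp_eq hl,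
    show K * zp l + 1 - gateInput a c y l = K * zp l - (gateInput a c y l - 1) by ring] at hzp₀ hzp₁
  rw [dpzm_eq hl, show K * zm l + gateInput a c y l = K * zm l - -gateInput a c y l by ring]
    at hzm₀ hzm₁
  have hdy : dpy n K δ a c l y zp zm = 2 * δ ^ l *
      (y l - (gateInput a c y l - dpiy n K δ a c l l y zp zm / (2 * δ ^ l))) := by
    rw [dpy_eq_dpiy_add hl]
    field_simp
    ring
  rw [hdy] at hy₀ hy₁
  have hp := mul_eq_max_of_kkt hKδl hK.le hzp (by linarith) hzp₀ hzp₁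
  have hm := mul_eq_max_of_kkt hKδl hK.le hzm (by linarith) hzm₀ hzm₁
  refine ⟨eq_trunc_of_kkt hδl (hkkt.1 l (by omega) hln) hy₀ hy₁, ?_⟩
  rw [gateResidual, trunc_eq_sub_max_add_max, mul_sub, hp, hm]
  ring

theorem IsKKT.dpiy_eq_add (hkkt : IsKKT n K δ a c y zp zm) (hK : 0 < K) (hδ : 0 < δ) {i : ℕ}
    (hi : 2 ≤ i) (hin : i < n) (hI : |gateInput a c y (i + 1)| ≤ K) {μ : ℝ}
    (hμ : trunc (gateInput a c y (i + 1)) - trunc (gateInput a c y (i + 1)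
      - dpiy n K δ a c (i + 1) (i + 1) y zp zm / (2 * δ ^ (i + 1)))
      = μ * (dpiy n K δ a c (i + 1) (i + 1) y zp zm / (2 * δ ^ (i + 1))))
    {k : ℕ} (hk : k ∈ Icc 1 i) :
    dpiy n K δ a c i k y zp zm = dpiy n K δ a c (i + 1) k y zp zm
      + μ * dpiy n K δ a c (i + 1) (i + 1) y zp zm * a (i + 1) k := by
  obtain ⟨hy, hr⟩ := hkkt.gate_eq hK hδ (l := i + 1) (mem_Icc.2 ⟨by omega, hin⟩) hI
  have hG : 2 * δ ^ (i + 1) * (dpiy n K δ a c (i + 1) (i + 1) y zp zm / (2 * δ ^ (i + 1)))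
      = dpiy n K δ a c (i + 1) (i + 1) y zp zm := by
    field_simp
  rw [dpiy_eq_dpiy_succ hin hk, hr, hy]
  linear_combination (2 * δ ^ (i + 1) * a (i + 1) k) * hμ + (μ * a (i + 1) k) * hG

end KKT

theorem sum_abs_le_of_backward_recursion {n i₀ : ℕ} {D A : ℕ → ℕ → ℝ} {K C : ℝ} (hK : 1 ≤ K)
    (hC : 0 ≤ C) (hA : ∀ i, i₀ ≤ i → i < n → ∑ k ∈ Ico 1 (i + 1), |A (i + 1) k| ≤ K)
    (hbase : ∀ k ∈ Icc 1 n, D n k = if k = n then C else 0)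
    (hstep : ∀ i, i₀ ≤ i → i < n → ∃ μ : ℝ, |μ| ≤ 1 ∧
      ∀ k ∈ Icc 1 i, D i k = D (i + 1) k + μ * D (i + 1) (i + 1) * A (i + 1) k)
    {i : ℕ} (hi : i₀ ≤ i) (hin : i ≤ n) : ∑ k ∈ Icc 1 i, |D i k| ≤ C * K ^ (n - i) := by
  induction hin using Nat.decreasingInduction with
  | self =>
    rw [Nat.sub_self, pow_zero, mul_one, sum_congr rfl fun k hk => by rw [hbase k hk, apply_ite abs,
      abs_zero], sum_ite_eq']
    split_ifs <;> simp [abs_of_nonneg hC, hC]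
  | of_succ i hin ih =>
    obtain ⟨μ, hμ, hD⟩ := hstep i hi hin
    have hsum := ih (by omega)
    rw [← insert_Icc_right_eq_Icc_add_one (by omega), sum_insert (by simp)] at hsum
    have hA' := hA i hi hin
    rw [Ico_add_one_right_eq_Icc] at hA'
    set d := |D (i + 1) (i + 1)|
    have hterm : ∀ k ∈ Icc 1 i, |D i k| ≤ |D (i + 1) k| + d * |A (i + 1) k| := fun k hk => by
      rw [hD k hk]
      refine (abs_add_le _ _).trans (add_le_add le_rfl ?_)
      rw [abs_mul, abs_mul]
      exact mul_le_mul_of_nonneg_right (mul_le_of_le_one_left (abs_nonneg _) hμ) (abs_nonneg _)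
    have hd : d * ∑ k ∈ Icc 1 i, |A (i + 1) k| ≤ d * K :=
      mul_le_mul_of_nonneg_left hA' (abs_nonneg _)
    have hS : ∑ k ∈ Icc 1 i, |D (i + 1) k| ≤ K * ∑ k ∈ Icc 1 i, |D (i + 1) k| :=
      le_mul_of_one_le_left (sum_nonneg fun _ _ => abs_nonneg _) hK
    calc ∑ k ∈ Icc 1 i, |D i k|
        ≤ ∑ k ∈ Icc 1 i, |D (i + 1) k| + d * ∑ k ∈ Icc 1 i, |A (i + 1) k| := by
          rw [mul_sum, ← sum_add_distrib]; exact sum_le_sum hterm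
      _ ≤ K * (d + ∑ k ∈ Icc 1 i, |D (i + 1) k|) := by linarith
      _ ≤ K * (C * K ^ (n - (i + 1))) := mul_le_mul_of_nonneg_left hsum (by linarith)
      _ = C * K ^ (n - i) := by rw [show n - i = n - (i + 1) + 1 by omega, pow_succ]; ring

/-- `∏_{j ∈ s} λ_{s_j·j}` for the sign vector `s` that is `+1` exactly on `T`. -/
def signWeight (lam : ℕ → ℝ) (s T : Finset ℕ) : ℝ :=
  ∏ j ∈ s, if j ∈ T then lam j else 1 - lam j

theorem sum_powerset_insert_signWeight {lam : ℕ → ℝ} {s : Finset ℕ} {l : ℕ} (hl : l ∉ s)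
    (F : Finset ℕ → ℝ) :
    ∑ T ∈ (insert l s).powerset, signWeight lam (insert l s) T * F T
      = ∑ T ∈ s.powerset, signWeight lam s T * ((1 - lam l) * F T + lam l * F (insert l T)) := by
  rw [sum_powerset_insert hl, ← sum_add_distrib]
  refine sum_congr rfl fun T hT => ?_
  have hlT : l ∉ T := fun h => hl (mem_powerset.1 hT h)
  have hw : (∏ j ∈ s, if j ∈ insert l T then lam j else 1 - lam j)
      = ∏ j ∈ s, if j ∈ T then lam j else 1 - lam j :=
    prod_congr rfl fun j hj => by simp [ne_of_mem_of_not_mem hj hl]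
  simp only [signWeight, prod_insert hl, if_neg hlT, if_pos (mem_insert_self l T), hw]
  ring

theorem sum_powerset_insert_signWeight_erase {lam : ℕ → ℝ} {s : Finset ℕ} {l : ℕ} (hl : l ∉ s)
    (g : Finset ℕ → ℕ → ℝ) (k : ℕ) (σp σm A : ℝ) :
    ∑ T ∈ (insert l s).powerset, signWeight lam (insert l s) T *
        (g (T.erase l) k + g (T.erase l) l * (if l ∈ T then σp else σm) * A)
      = ∑ T ∈ s.powerset, signWeight lam s T * g T k
        + (lam l * σp + (1 - lam l) * σm) * A * ∑ T ∈ s.powerset, signWeight lam s T * g T l := by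
  rw [sum_powerset_insert_signWeight hl, mul_sum, ← sum_add_distrib]
  refine sum_congr rfl fun T hT => ?_
  have hlT : l ∉ T := fun h => hl (mem_powerset.1 hT h)
  simp only [erase_insert hlT, erase_eq_of_notMem hlT, if_neg hlT, if_pos (mem_insert_self l T)]
  ring

theorem exists_circAffineOn_of_backward_recursion {a : ℕ → ℕ → ℝ} {c π lam σp σm y r : ℕ → ℝ}
    {D : ℕ → ℕ → ℝ} {K C : ℝ} {n i₀ : ℕ} (hn : 1 ≤ n)
    (hK : ∀ i, i₀ ≤ i → i < n → ∑ j ∈ Ico 1 (i + 1), |a (i + 1) j| ≤ K)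
    (hr : ∀ i, i₀ ≤ i → i < n → 0 ≤ r i ∧ r i ≤ r (i + 1))
    (hwin : ∀ i, i₀ ≤ i → i < n →
      TruncWindow (gateInput a c y (i + 1) + π (i + 1)) (K * r i) (σp (i + 1)) (y (i + 1))
          (r (i + 1)) ∧
        TruncWindow (gateInput a c y (i + 1) - π (i + 1)) (K * r i) (σm (i + 1)) (y (i + 1))
          (r (i + 1)))
    (hbase : ∀ k ∈ Icc 1 n, D n k = if k = n then C else 0)
    (hstep : ∀ i, i₀ ≤ i → i < n → ∀ k ∈ Icc 1 i, D i k = D (i + 1) k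
      + (lam (i + 1) * σp (i + 1) + (1 - lam (i + 1)) * σm (i + 1)) * D (i + 1) (i + 1)
        * a (i + 1) k)
    {i : ℕ} (hi : i₀ ≤ i) (hin : i ≤ n) :
    ∃ g : Finset ℕ → ℕ → ℝ, (∀ T, CircAffineOn a c (signedAbove i π T) i n y (r i) (g T)) ∧
      ∀ k ∈ Icc 1 i,
        D i k = C * ∑ T ∈ (Icc (i + 1) n).powerset, signWeight lam (Icc (i + 1) n) T * g T k := by
  induction hin using Nat.decreasingInduction with
  | self =>
    refine ⟨fun _ j => if j = n then 1 else 0, fun T => circAffineOn_self hn, fun k hk => ?_⟩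
    rw [Icc_eq_empty (by omega), powerset_empty, sum_singleton, signWeight, prod_empty, one_mul,
      hbase k hk]
    by_cases h : k = n <;> simp [h]
  | of_succ i hin ih =>
    obtain ⟨g, hg, hD⟩ := ih (by omega)
    obtain ⟨hwp, hwm⟩ := hwin i hi hin
    obtain ⟨hr0, hrr⟩ := hr i hi hin
    refine ⟨fun T j => g (T.erase (i + 1)) j + g (T.erase (i + 1)) (i + 1)
        * (if i + 1 ∈ T then σp (i + 1) else σm (i + 1)) * a (i + 1) j, fun T => ?_, fun k hk => ?_⟩
    · refine ((hg (T.erase (i + 1))).congr_perturbation fun m hm => ?_).of_succ (hK i hi hin)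
        hr0 hrr ?_
      · simp [signedAbove, show ¬ m ≤ i + 1 by omega, show ¬ m ≤ i by omega,
          show m ≠ i + 1 by omega]
      · by_cases h : i + 1 ∈ T
        · simpa [signedAbove, h] using hwp
        · simpa [signedAbove, h, sub_eq_add_neg] using hwm
    · obtain ⟨hk1, hki⟩ := mem_Icc.1 hk
      rw [hstep i hi hin k hk, hD k (mem_Icc.2 ⟨hk1, by omega⟩),
        hD (i + 1) (mem_Icc.2 ⟨by omega, le_rfl⟩),
        ← insert_Icc_add_one_left_eq_Icc (show i + 1 ≤ n by omega),
        sum_powerset_insert_signWeight_erase (by simp)]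
      ring

/-- Conditions on the perturbation, weight and slopes of gate `i + 1` (not `i`). -/
def IsGatePerturbation (n : ℕ) (K δ : ℝ) (a : ℕ → ℕ → ℝ) (c y zp zm : ℕ → ℝ) (i : ℕ)
    (p lam σp σm : ℝ) : Prop :=
  |p| ≤ 4 * K * (2 * K * δ) ^ (n - i) ∧ lam ∈ Set.Icc (0 : ℝ) 1 ∧
    TruncWindow (gateInput a c y (i + 1) + p) (K * (2 * (2 * K * δ) ^ (n - i))) σp
      (y (i + 1)) (2 * (2 * K * δ) ^ (n - (i + 1))) ∧
    TruncWindow (gateInput a c y (i + 1) - p) (K * (2 * (2 * K * δ) ^ (n - i))) σm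
      (y (i + 1)) (2 * (2 * K * δ) ^ (n - (i + 1))) ∧
    ∀ k ∈ Icc 1 i, dpiy n K δ a c i k y zp zm = dpiy n K δ a c (i + 1) k y zp zm
      + (lam * σp + (1 - lam) * σm) * dpiy n K δ a c (i + 1) (i + 1) y zp zm * a (i + 1) k

section Gates

variable {n : ℕ} {K δ : ℝ} {a : ℕ → ℕ → ℝ} {c y zp zm : ℕ → ℝ}

theorem IsKKT.abs_gateInput_le (hkkt : IsKKT n K δ a c y zp zm)
    (hK : ∀ i, 3 ≤ i → i ≤ n → (∑ j ∈ Ico 1 i, |a i j|) + |c i| ≤ K) {l : ℕ} (hl : l ∈ Icc 3 n) :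
    |gateInput a c y l| ≤ K := by
  obtain ⟨hl3, hln⟩ := mem_Icc.1 hl
  refine _root_.abs_gateInput_le (hK l hl3 hln) fun j hj => ?_
  obtain ⟨hj1, hj2⟩ := mem_Ico.1 hj
  obtain ⟨h0, h1⟩ := hkkt.1 j hj1 (by omega)
  exact abs_le.2 ⟨by linarith, h1⟩

theorem IsKKT.sum_abs_dpiy_le (hkkt : IsKKT n K δ a c y zp zm) (hK1 : 1 ≤ K)
    (hK : ∀ i, 3 ≤ i → i ≤ n → (∑ j ∈ Ico 1 i, |a i j|) + |c i| ≤ K) (hδ0 : 0 < δ) {i : ℕ}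
    (hi : 2 ≤ i) (hin : i ≤ n) :
    ∑ k ∈ Icc 1 i, |dpiy n K δ a c i k y zp zm| ≤ δ ^ (n + 1) * K ^ (n - i) := by
  refine sum_abs_le_of_backward_recursion (D := fun i k => dpiy n K δ a c i k y zp zm) (A := a)
    hK1 (by positivity) (fun i hi hin => ?_) (fun k _ => dpiy_top k) (fun i hi hin => ?_) hi hin
  · linarith [hK (i + 1) (by omega) hin, abs_nonneg (c (i + 1))]
  · obtain ⟨μ, hμ, he⟩ := exists_mem_Icc_trunc_sub_eq (gateInput a c y (i + 1))
      (gateInput a c y (i + 1) - dpiy n K δ a c (i + 1) (i + 1) y zp zm / (2 * δ ^ (i + 1)))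
    exact ⟨μ, abs_le.2 ⟨by linarith [hμ.1], hμ.2⟩, fun k hk =>
      hkkt.dpiy_eq_add (by linarith) hδ0 hi hin
        (hkkt.abs_gateInput_le hK (mem_Icc.2 ⟨by omega, hin⟩)) (by rw [he, sub_sub_cancel]) hk⟩

/-- The bound on `∇p_{i+1}` makes `G_{i+1}` smaller than the window radius `2K (2Kδ)^{n-i}`. -/
theorem IsKKT.exists_gate_perturbation (hkkt : IsKKT n K δ a c y zp zm) (hK1 : 1 ≤ K)
    (hK : ∀ i, 3 ≤ i → i ≤ n → (∑ j ∈ Ico 1 i, |a i j|) + |c i| ≤ K) (hδ0 : 0 < δ)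
    (hδ : 16 * K ^ 2 * δ ≤ 1) {i : ℕ} (hi : 2 ≤ i) (hin : i < n) :
    ∃ p lam σp σm : ℝ, IsGatePerturbation n K δ a c y zp zm i p lam σp σm := by
  have hK0 : 0 < K := by linarith
  have hl : i + 1 ∈ Icc 3 n := mem_Icc.2 ⟨by omega, hin⟩
  obtain ⟨j, hj⟩ : ∃ j, n - i = j + 1 := ⟨n - i - 1, by omega⟩
  have hj' : n - (i + 1) = j := by omega
  unfold IsGatePerturbation
  rw [hj, hj']
  have hej : 0 ≤ (2 * K * δ) ^ j := by positivity
  have hwin : 4 * (K * (2 * (2 * K * δ) ^ (j + 1))) ≤ (2 * K * δ) ^ j := by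
    rw [pow_succ]
    nlinarith
  have hG : |dpiy n K δ a c (i + 1) (i + 1) y zp zm / (2 * δ ^ (i + 1))|
      ≤ K * (2 * (2 * K * δ) ^ (j + 1)) := by
    have h := (single_le_sum (fun k _ => abs_nonneg (dpiy n K δ a c (i + 1) k y zp zm))
      (mem_Icc.2 ⟨(by omega : 1 ≤ i + 1), le_rfl⟩)).trans
        (hkkt.sum_abs_dpiy_le hK1 hK hδ0 (by omega) hin)
    rw [hj', show n + 1 = (i + 1) + (j + 1) by omega, pow_add] at h
    rw [abs_div, abs_of_pos (by positivity : (0 : ℝ) < 2 * δ ^ (i + 1)),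
      div_le_iff₀ (by positivity)]
    have h2 : (1 : ℝ) ≤ 2 ^ (j + 1) := one_le_pow₀ (by norm_num)
    calc _ ≤ δ ^ (i + 1) * δ ^ (j + 1) * K ^ j := h
      _ ≤ δ ^ (i + 1) * δ ^ (j + 1) * K ^ (j + 1) :=
          mul_le_mul_of_nonneg_left (pow_le_pow_right₀ hK1 j.le_succ) (by positivity)
      _ ≤ δ ^ (i + 1) * δ ^ (j + 1) * K ^ (j + 1) * (4 * K * 2 ^ (j + 1)) :=
          le_mul_of_one_le_right (by positivity) (by nlinarith)
      _ = K * (2 * (2 * K * δ) ^ (j + 1)) * (2 * δ ^ (i + 1)) := by ring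
  obtain ⟨p, lam, σp, σm, hp, hlam, hwp, hwm, hμ⟩ :=
    exists_truncWindow_pair (x := gateInput a c y (i + 1)) (r := 2 * (2 * K * δ) ^ j)
      (by nlinarith [pow_le_one₀ (by positivity) (by nlinarith : 2 * K * δ ≤ 1) (n := j)]) hG
      (by linarith)
  rw [← (hkkt.gate_eq hK0 hδ0 hl (hkkt.abs_gateInput_le hK hl)).1] at hwp hwm
  exact ⟨p, lam, σp, σm, by linarith, hlam, hwp, hwm, fun k hk =>
    hkkt.dpiy_eq_add hK0 hδ0 hi hin (hkkt.abs_gateInput_le hK hl) hμ hk⟩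

theorem IsKKT.exists_gate_perturbations (hkkt : IsKKT n K δ a c y zp zm) (hK1 : 1 ≤ K)
    (hK : ∀ i, 3 ≤ i → i ≤ n → (∑ j ∈ Ico 1 i, |a i j|) + |c i| ≤ K) (hδ0 : 0 < δ)
    (hδ : 16 * K ^ 2 * δ ≤ 1) :
    ∃ π lam σp σm : ℕ → ℝ, ∀ i, 2 ≤ i → i < n →
      IsGatePerturbation n K δ a c y zp zm i (π (i + 1)) (lam (i + 1)) (σp (i + 1))
        (σm (i + 1)) := by
  -- the data of gate `l` is chosen as a function of `l`, for the `i` with `l = i + 1`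
  have hgate : ∀ l, ∃ p lam σp σm : ℝ, ∀ i, l = i + 1 → 2 ≤ i → i < n →
      IsGatePerturbation n K δ a c y zp zm i p lam σp σm := by
    intro l
    by_cases hl : ∃ i, l = i + 1 ∧ 2 ≤ i ∧ i < n
    · obtain ⟨i, rfl, hi, hin⟩ := hl
      obtain ⟨p, lam, σp, σm, h⟩ := hkkt.exists_gate_perturbation hK1 hK hδ0 hδ hi hin
      refine ⟨p, lam, σp, σm, fun i' hi' _ _ => ?_⟩
      obtain rfl : i' = i := by omega
      exact h
    · exact ⟨0, 0, 0, 0, fun i hli hi hin => absurd ⟨i, hli, hi, hin⟩ hl⟩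
  choose π lam σp σm hgate using hgate
  exact ⟨π, lam, σp, σm, fun i hi hin => hgate (i + 1) i rfl hi hin⟩

end Gates
/-- Inductive backpropagation claim. -/
theorem backpropagation_induction (n : ℕ) (a : ℕ → ℕ → ℝ) (c : ℕ → ℝ)
    (K : ℝ) (hK1 : 1 ≤ K)
    (hK : ∀ i, 3 ≤ i → i ≤ n → (∑ j ∈ Finset.Ico 1 i, |a i j|) + |c i| ≤ K)
    (δ : ℝ) (hδ : δ ∈ Set.Ioo (0 : ℝ) (1 / (16 * K ^ 2)))
    (y zp zm : ℕ → ℝ) (hkkt : IsKKT n K δ a c y zp zm) :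
    ∃ π : ℕ → ℝ,
      (∀ i, 3 ≤ i → i ≤ n → |π i| ≤ 4 * K * (2 * K * δ) ^ (n + 1 - i)) ∧
      ∃ lam : ℕ → ℝ, (∀ i, 3 ≤ i → i ≤ n → lam i ∈ Set.Icc (0 : ℝ) 1) ∧
        ∀ i, 2 ≤ i → i ≤ n →
          (∀ T ∈ (Finset.Icc 3 n).powerset,
            ∀ v : Fin i → ℝ, (∀ j : Fin i, |v j - y (j.val + 1)| ≤ (2 * K * δ) ^ (n - i)) →
              DifferentiableAt ℝ (progFunFrom a c (signed π T) i n) v ∧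
              fderiv ℝ (progFunFrom a c (signed π T) i n) v
                = fderiv ℝ (progFunFrom a c (signed π T) i n)
                    (fun j : Fin i => y (j.val + 1))) ∧
          (∀ k, ∀ _hk1 : 1 ≤ k, ∀ hk2 : k ≤ i,
            dpiy n K δ a c i k y zp zm
              = δ ^ (n + 1) * ∑ T ∈ (Finset.Icc (i + 1) n).powerset,
                  (∏ j ∈ Finset.Icc (i + 1) n, if j ∈ T then lam j else 1 - lam j) *
                    fderiv ℝ (progFunFrom a c (signedAbove i π T) i n)
                      (fun j : Fin i => y (j.val + 1))
                      (Pi.single (⟨k - 1, by omega⟩ : Fin i) 1)) := by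
  obtain ⟨hδ0, hδ1⟩ := hδ
  have hKδ : 16 * K ^ 2 * δ ≤ 1 := by
    rw [lt_div_iff₀ (by positivity)] at hδ1
    linarith
  have h2Kδ : 0 < 2 * K * δ := by positivity
  obtain ⟨π, lam, σp, σm, hgate⟩ := hkkt.exists_gate_perturbations hK1 hK hδ0 hKδ
  have hrepr := fun i (hi : 2 ≤ i) (hin : i ≤ n) =>
    exists_circAffineOn_of_backward_recursion (r := fun i => 2 * (2 * K * δ) ^ (n - i))
      (D := fun i k => dpiy n K δ a c i k y zp zm) (by omega)
      (fun i hi hin => by linarith [hK (i + 1) (by omega) hin, abs_nonneg (c (i + 1))])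
      (fun i _ _ => ⟨by positivity, by
        gcongr 2 * ?_
        exact pow_le_pow_of_le_one h2Kδ.le (by nlinarith) (by omega)⟩)
      (fun i hi hin => ⟨(hgate i hi hin).2.2.1, (hgate i hi hin).2.2.2.1⟩)
      (fun k _ => dpiy_top k) (fun i hi hin => (hgate i hi hin).2.2.2.2) hi hin
  refine ⟨π, fun l hl hln => ?_, lam, fun l hl hln => ?_, fun i hi hin => ?_⟩
  · obtain ⟨i, rfl⟩ : ∃ i, l = i + 1 := ⟨l - 1, by omega⟩
    simpa only [Nat.add_sub_add_right] using (hgate i (by omega) (by omega)).1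
  · obtain ⟨i, rfl⟩ : ∃ i, l = i + 1 := ⟨l - 1, by omega⟩
    exact (hgate i (by omega) (by omega)).2.1
  obtain ⟨g, hg, hD⟩ := hrepr i hi hin
  have hρ : 0 < 2 * (2 * K * δ) ^ (n - i) := by positivity
  refine ⟨fun T _ v hv => ((hg T).congr_perturbation fun m hm => ?_).fderiv_progFunFrom_eq hρ
    fun j => (hv j).trans_lt (by linarith [pow_pos h2Kδ (n - i)]), fun k hk1 hk2 => ?_⟩
  · simp [signedAbove, signed, show ¬ m ≤ i by omega]
  · rw [hD k (mem_Icc.2 ⟨hk1, hk2⟩)]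
    refine congrArg _ (sum_congr rfl fun T _ => ?_)
    rw [(hg T).fderiv_progFunFrom_single hρ, signWeight, Nat.sub_add_cancel hk1]
end
end

section
/- From approximate to exact KKT points of a quadratic program over the box: Let p : ℝⁿ → ℝ be a polynomial of degree at most 2. Then there exists ε > 0 such that for every ε-KKT point x* of p over [0,1]ⁿ, there exists an exact KKT point x of p over [0,1]ⁿ satisfying x_i = 0 for every i with x*_i = 0 and x_i = 1 for every i with x*_i = 1. -/
open MvPolynomial

/-- `x` is an `ε`-KKT point of the minimization of the polynomial `P` over the box `[0,1]ⁿ`. -/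
def IsEpsKKT (n : ℕ) (P : MvPolynomial (Fin n) ℝ) (ε : ℝ) (x : Fin n → ℝ) : Prop :=
  (∀ i, x i ∈ Set.Icc (0 : ℝ) 1) ∧
  (∀ i, (0 < x i → eval x (pderiv i P) ≤ ε) ∧ (x i < 1 → -ε ≤ eval x (pderiv i P)))

private lemma epsKKT_mono (n : ℕ) (P : MvPolynomial (Fin n) ℝ) {ε ε' : ℝ} (h : ε ≤ ε')
    {x : Fin n → ℝ} (hx : IsEpsKKT n P ε x) : IsEpsKKT n P ε' x := by
  refine ⟨hx.1, fun i => ⟨fun hi => (hx.2 i).1 hi |>.trans h, fun hi => ?_⟩⟩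
  exact le_trans (neg_le_neg h) ((hx.2 i).2 hi)

private def KKTset (n : ℕ) (P : MvPolynomial (Fin n) ℝ) (S₀ S₁ : Finset (Fin n)) (ε : ℝ) :
    Set (Fin n → ℝ) :=
  {x | IsEpsKKT n P ε x ∧ (∀ i ∈ S₀, x i = 0) ∧ (∀ i ∈ S₁, x i = 1)}

private lemma KKTset_closed (n : ℕ) (P : MvPolynomial (Fin n) ℝ) (S₀ S₁ : Finset (Fin n))
    (ε : ℝ) : IsClosed (KKTset n P S₀ S₁ ε) := by
  have hset : KKTset n P S₀ S₁ ε =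
      (⋂ i, (fun x : Fin n → ℝ => x i) ⁻¹' Set.Icc 0 1) ∩
      (⋂ i, ({x : Fin n → ℝ | x i ≤ 0} ∪ {x | eval x (pderiv i P) ≤ ε})) ∩
      (⋂ i, ({x : Fin n → ℝ | 1 ≤ x i} ∪ {x | -ε ≤ eval x (pderiv i P)})) ∩
      (⋂ i ∈ S₀, {x : Fin n → ℝ | x i = 0}) ∩
      (⋂ i ∈ S₁, {x : Fin n → ℝ | x i = 1}) := by
    ext x
    simp only [KKTset, IsEpsKKT, Set.mem_setOf_eq, Set.mem_inter_iff, Set.mem_iInter,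
      Set.mem_preimage, Set.mem_union, Set.mem_Icc]
    constructor
    · rintro ⟨⟨hbox, hkkt⟩, h0, h1⟩
      refine ⟨⟨⟨⟨hbox, fun i => ?_⟩, fun i => ?_⟩, h0⟩, h1⟩
      · rcases le_or_gt (x i) 0 with h | h
        · exact Or.inl h
        · exact Or.inr ((hkkt i).1 h)
      · rcases le_or_gt 1 (x i) with h | h
        · exact Or.inl h
        · exact Or.inr ((hkkt i).2 h)
    · rintro ⟨⟨⟨⟨hbox, hle⟩, hge⟩, h0⟩, h1⟩
      refine ⟨⟨hbox, fun i => ⟨fun hi => ?_, fun hi => ?_⟩⟩, h0, h1⟩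
      · rcases hle i with h | h
        · exact absurd hi (not_lt.2 h)
        · exact h
      · rcases hge i with h | h
        · exact absurd hi (not_lt.2 h)
        · exact h
  rw [hset]
  have hc : ∀ i : Fin n, Continuous fun x : Fin n → ℝ => eval x (pderiv i P) :=
    fun i => MvPolynomial.continuous_eval _
  refine IsClosed.inter (IsClosed.inter (IsClosed.inter (IsClosed.inter ?_ ?_) ?_) ?_) ?_
  · exact isClosed_iInter fun i => (isClosed_Icc).preimage (continuous_apply i)
  · exact isClosed_iInter fun i =>
      ((isClosed_le (continuous_apply i) continuous_const).union
        (isClosed_le (hc i) continuous_const))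
  · exact isClosed_iInter fun i =>
      ((isClosed_le continuous_const (continuous_apply i)).union
        (isClosed_le continuous_const (hc i)))
  · exact isClosed_biInter fun i _ => isClosed_eq (continuous_apply i) continuous_const
  · exact isClosed_biInter fun i _ => isClosed_eq (continuous_apply i) continuous_const

private lemma KKTset_subset_box (n : ℕ) (P : MvPolynomial (Fin n) ℝ) (S₀ S₁ : Finset (Fin n))
    (ε : ℝ) : KKTset n P S₀ S₁ ε ⊆ Set.pi Set.univ (fun _ : Fin n => Set.Icc (0:ℝ) 1) := by
  intro x hx i _
  exact hx.1.1 i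

private lemma exists_eps (n : ℕ) (P : MvPolynomial (Fin n) ℝ) (S₀ S₁ : Finset (Fin n)) :
    ∃ ε : ℝ, 0 < ε ∧ ((KKTset n P S₀ S₁ ε).Nonempty → (KKTset n P S₀ S₁ 0).Nonempty) := by
  by_cases h0 : (KKTset n P S₀ S₁ 0).Nonempty
  · exact ⟨1, one_pos, fun _ => h0⟩
  · by_contra hcon
    push_neg at hcon
    -- so for every ε > 0, KKTset ε is nonempty
    have hne : ∀ k : ℕ, (KKTset n P S₀ S₁ (1 / (k + 1))).Nonempty := by
      intro k
      have hpos : (0:ℝ) < 1 / (k + 1) := by positivity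
      exact (hcon _ hpos).1
    set Z : ℕ → Set (Fin n → ℝ) := fun k => KKTset n P S₀ S₁ (1 / (k + 1)) with hZ
    have hanti : Antitone Z := by
      intro k l hkl x hx
      refine ⟨epsKKT_mono n P ?_ hx.1, hx.2⟩
      apply one_div_le_one_div_of_le (by positivity)
      have : (k:ℝ) ≤ l := Nat.cast_le.2 hkl
      linarith
    have hbox : IsCompact (Set.pi Set.univ (fun _ : Fin n => Set.Icc (0:ℝ) 1)) :=
      isCompact_univ_pi fun _ => isCompact_Icc
    have hZc : ∀ k, IsCompact (Z k) := fun k =>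
      hbox.of_isClosed_subset (KKTset_closed n P S₀ S₁ _) (KKTset_subset_box n P S₀ S₁ _)
    have hint : (⋂ k, Z k).Nonempty :=
      IsCompact.nonempty_iInter_of_directed_nonempty_isCompact_isClosed Z hanti.directed_ge
        hne hZc (fun k => KKTset_closed n P S₀ S₁ _)
    obtain ⟨x, hx⟩ := hint
    simp only [Set.mem_iInter] at hx
    apply h0
    refine ⟨x, ⟨⟨(hx 0).1.1, fun i => ⟨fun hi => ?_, fun hi => ?_⟩⟩, (hx 0).2⟩⟩
    · by_contra hlt
      push_neg at hlt
      obtain ⟨k, hk⟩ := exists_nat_one_div_lt hlt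
      exact absurd (((hx k).1.2 i).1 hi) (not_le.2 hk)
    · rw [neg_zero]
      by_contra hlt
      push_neg at hlt
      have : (0:ℝ) < -eval x (pderiv i P) := by linarith
      obtain ⟨k, hk⟩ := exists_nat_one_div_lt this
      have := ((hx k).1.2 i).2 hi
      have : -(1 / ((k:ℝ) + 1)) ≤ eval x (pderiv i P) := this
      linarith

/-- From approximate to exact KKT points of a quadratic program over the box. -/
theorem approx_to_exact_KKT (n : ℕ) (P : MvPolynomial (Fin n) ℝ)
    (hdeg : P.totalDegree ≤ 2) :
    ∃ ε : ℝ, 0 < ε ∧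
      ∀ xstar : Fin n → ℝ, IsEpsKKT n P ε xstar →
        ∃ x : Fin n → ℝ, IsEpsKKT n P 0 x ∧
          (∀ i, xstar i = 0 → x i = 0) ∧ (∀ i, xstar i = 1 → x i = 1) := by
  classical
  set εf : Finset (Fin n) × Finset (Fin n) → ℝ :=
    fun p => (exists_eps n P p.1 p.2).choose with hεf
  have hεfpos : ∀ p, 0 < εf p := fun p => (exists_eps n P p.1 p.2).choose_spec.1
  have hεfspec : ∀ p, (KKTset n P p.1 p.2 (εf p)).Nonempty → (KKTset n P p.1 p.2 0).Nonempty :=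
    fun p => (exists_eps n P p.1 p.2).choose_spec.2
  have hne : (Finset.univ : Finset (Finset (Fin n) × Finset (Fin n))).Nonempty :=
    Finset.univ_nonempty
  set E : ℝ := Finset.univ.inf' hne εf with hE
  have hEpos : 0 < E := by
    rw [hE, Finset.lt_inf'_iff]
    exact fun p _ => hεfpos p
  refine ⟨E, hEpos, fun xstar hxstar => ?_⟩
  set S₀ : Finset (Fin n) := Finset.univ.filter (fun i => xstar i = 0) with hS₀
  set S₁ : Finset (Fin n) := Finset.univ.filter (fun i => xstar i = 1) with hS₁
  have hmem : xstar ∈ KKTset n P S₀ S₁ (εf (S₀, S₁)) := by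
    refine ⟨epsKKT_mono n P ?_ hxstar, fun i hi => ?_, fun i hi => ?_⟩
    · exact Finset.inf'_le εf (Finset.mem_univ _)
    · exact (Finset.mem_filter.1 hi).2
    · exact (Finset.mem_filter.1 hi).2
  obtain ⟨x, hx⟩ := hεfspec (S₀, S₁) ⟨xstar, hmem⟩
  refine ⟨x, hx.1, fun i hi => ?_, fun i hi => ?_⟩
  · exact hx.2.1 i (Finset.mem_filter.2 ⟨Finset.mem_univ _, hi⟩)
  · exact hx.2.2 i (Finset.mem_filter.2 ⟨Finset.mem_univ _, hi⟩)
end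

section
/- Existence of rational KKT points for quadratic programs over the box: Let p : ℝⁿ → ℝ be a polynomial of degree at most 2 with rational coefficients. Then there exists a KKT point x ∈ [0,1]ⁿ of the minimization of p over [0,1]ⁿ all of whose coordinates are rational. -/
/-!
A minimiser `x` of `P` over the compact box is a KKT point. Whether a point `z` is a KKT point
depends only on the signs of the affine functions `z i`, `z i - 1` and `∂P/∂z_i (z)`, whose
coefficients are rational. Rational points are dense in the real solution set of a rational
linear system, so there is a rational point close to `x` at which the functions vanishing at `x`
still vanish, and by continuity the others keep their sign: that point is a rational KKT point.
-/

open MvPolynomial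

/-- `x` is a KKT point of the minimization of the polynomial `P` over the box `[0,1]ⁿ`. -/
def IsKKTPt (n : ℕ) (P : MvPolynomial (Fin n) ℝ) (x : Fin n → ℝ) : Prop :=
  (∀ i, x i ∈ Set.Icc (0 : ℝ) 1) ∧
  (∀ i, (0 < x i → eval x (pderiv i P) ≤ 0) ∧ (x i < 1 → 0 ≤ eval x (pderiv i P)))

open Topology

theorem totalDegree_map_of_injective {R S σ : Type*} [CommSemiring R] [CommSemiring S]
    {f : R →+* S} (hf : Function.Injective f) (p : MvPolynomial σ R) :
    (map f p).totalDegree = p.totalDegree := by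
  rw [totalDegree, support_map_of_injective p hf, totalDegree]

theorem totalDegree_pderiv_le {R σ : Type*} [CommSemiring R] (i : σ) (p : MvPolynomial σ R) :
    (pderiv i p).totalDegree ≤ p.totalDegree - 1 := by
  refine Finset.sup_le fun m hm => ?_
  rw [mem_support_iff, coeff_pderiv] at hm
  have hdeg := le_totalDegree (mem_support_iff.mpr (left_ne_zero_of_mul hm))
  rw [Finsupp.sum_add_index' (fun _ => rfl) fun _ _ _ => rfl, Finsupp.sum_single_index rfl] at hdeg
  omega

theorem aeval_eq_of_totalDegree_le_one {R S ι : Type*} [CommSemiring R] [CommSemiring S]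
    [Algebra R S] [Fintype ι] {Q : MvPolynomial ι R} (hQ : Q.totalDegree ≤ 1) (z : ι → S) :
    aeval z Q = algebraMap R S (coeff 0 Q) +
      ∑ j, algebraMap R S (coeff (Finsupp.single j 1) Q) * z j := by
  classical
  have hsupp : Q.support ⊆ insert 0 (Finset.univ.image (Finsupp.single · 1)) := by
    intro m hm
    have hm1 : m.degree ≤ 1 := (le_totalDegree hm).trans hQ
    rcases Nat.le_one_iff_eq_zero_or_eq_one.mp hm1 with h | h
    · simp [(Finsupp.degree_eq_zero_iff m).mp h]
    · obtain ⟨j, rfl⟩ := (Finsupp.range_single_one (σ := ι)).symm.subset h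
      simp
  conv_lhs => rw [Q.as_sum, map_sum]
  rw [Finset.sum_subset hsupp fun m _ hm => by simp [notMem_support_iff.mp hm],
    Finset.sum_insert (by simp),
    Finset.sum_image fun _ _ _ _ h => Finsupp.single_left_injective one_ne_zero h]
  simp [aeval_monomial]

theorem ContinuousAt.eventually_sign_eq {X α : Type*} [TopologicalSpace X] [Zero α]
    [LinearOrder α] [TopologicalSpace α] [OrderTopology α] {f : X → α} {x : X}
    (hf : ContinuousAt f x) (hx : f x ≠ 0) :
    ∀ᶠ z in 𝓝 x, SignType.sign (f z) = SignType.sign (f x) :=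
  Filter.tendsto_pure.mp (nhds_discrete SignType ▸ (continuousAt_sign_of_ne_zero hx).comp hf)

section RationalPoints

variable {ι κ : Type*} [Fintype ι]

theorem mem_closure_ratCast_image_ker (r : κ → ι → ℚ) (u : ι → ℝ)
    (hu : ∀ k, ∑ j, (r k j : ℝ) * u j = 0) :
    u ∈ closure ((fun q j => (q j : ℝ)) ''
      {q : ι → ℚ | ∀ k, ∑ j, r k j * q j = 0}) := by
  let B : LinearMap.BilinForm ℚ (ι → ℚ) := dotProductBilin ℚ ℚ
  let W := Submodule.span ℚ (Set.range r)
  have hcompl : IsCompl W (B.orthogonal W) := by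
    refine (LinearMap.BilinForm.isCompl_orthogonal_iff_disjoint
      fun v w h => by simpa [B, dotProduct_comm] using h).mpr ?_
    refine Submodule.disjoint_def.mpr fun v hv hv' => ?_
    exact dotProduct_self_eq_zero.mp (by simpa [B] using
      LinearMap.BilinForm.mem_orthogonal_iff.mp hv' v hv)
  have hW : ∀ v ∈ W, ∑ j, (v j : ℝ) * u j = 0 := fun v hv => by
    induction hv using Submodule.span_induction with
    | mem v hv => obtain ⟨k, rfl⟩ := hv; exact hu k
    | zero => simp
    | add v w _ _ hv hw => simp [add_mul, Finset.sum_add_distrib, hv, hw]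
    | smul c v _ hv => simp [mul_assoc, ← Finset.mul_sum, hv]
  refine Metric.mem_closure_iff.mpr fun ε hε => ?_
  have hU : IsOpen {v : ι → ℝ | ∑ j, (v j - u j) ^ 2 < ε ^ 2} :=
    isOpen_lt (by fun_prop) continuous_const
  obtain ⟨p, hp⟩ := (DenseRange.piMap fun _ => Rat.denseRange_cast).exists_mem_open hU
    ⟨u, by simpa using pow_pos hε 2⟩
  obtain ⟨a, ha, b, hb, rfl⟩ := Submodule.mem_sup.mp (hcompl.sup_eq_top ▸ Submodule.mem_top :
    p ∈ W ⊔ B.orthogonal W)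
  have hbr : ∀ k, ∑ j, r k j * b j = 0 := fun k => by
    simpa [B, dotProduct] using
      LinearMap.BilinForm.mem_orthogonal_iff.mp hb (r k) (Submodule.subset_span ⟨k, rfl⟩)
  have hab : ∑ j, (a j : ℝ) * b j = 0 := by
    have : ∑ j, a j * b j = 0 := by
      simpa [B, dotProduct] using LinearMap.BilinForm.mem_orthogonal_iff.mp hb a ha
    exact_mod_cast this
  -- Projecting along `W` does not increase the distance to `u`, which is orthogonal to `W`.
  have hexpand : ∑ j, ((a j : ℝ) + b j - u j) ^ 2 =
      ∑ j, ((b j : ℝ) - u j) ^ 2 + ∑ j, (a j : ℝ) ^ 2 +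
        2 * (∑ j, (a j : ℝ) * b j - ∑ j, (a j : ℝ) * u j) := by
    simp only [Finset.mul_sum, ← Finset.sum_add_distrib, ← Finset.sum_sub_distrib]
    exact Finset.sum_congr rfl fun j _ => by ring
  have hdist : ∑ j, ((b j : ℝ) - u j) ^ 2 < ε ^ 2 := by
    simp only [Set.mem_ofPred_eq, Pi.map_apply, Pi.add_apply, Rat.cast_add] at hp
    have := Finset.sum_nonneg fun j (_ : j ∈ Finset.univ) => sq_nonneg (a j : ℝ)
    linarith [hW a ha]
  refine ⟨_, ⟨b, hbr, rfl⟩, (dist_pi_lt_iff hε).mpr fun j => ?_⟩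
  rw [Real.dist_eq, abs_sub_comm]
  exact abs_lt_of_sq_lt_sq ((Finset.single_le_sum (f := fun j => ((b j : ℝ) - u j) ^ 2)
    (fun j _ => sq_nonneg _) (Finset.mem_univ j)).trans_lt hdist) hε.le

theorem mem_closure_ratCast_image_affine (c : κ → ℚ) (a : κ → ι → ℚ) (x : ι → ℝ)
    (hx : ∀ k, (c k : ℝ) + ∑ j, (a k j : ℝ) * x j = 0) :
    x ∈ closure ((fun q j => (q j : ℝ)) ''
      {q : ι → ℚ | ∀ k, c k + ∑ j, a k j * q j = 0}) := by
  -- Homogenize: `(1, x)` lies in the kernel of the rows `(c k, a k)`, and we dehomogenize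
  -- rational points of that kernel near `(1, x)` by dividing by their first coordinate.
  let r (k : κ) (o : Option ι) : ℚ := o.elim (c k) (a k)
  let u (o : Option ι) : ℝ := o.elim 1 x
  let dehom (w : Option ι → ℝ) (j : ι) : ℝ := w (some j) / w none
  have hu : u ∈ closure ((fun (q : Option ι → ℚ) o => (q o : ℝ)) ''
      {q | ∀ k, ∑ o, r k o * q o = 0}) :=
    mem_closure_ratCast_image_ker r u fun k => by simpa [r, u, Fintype.sum_option] using hx k
  have hopen : IsOpen {w : Option ι → ℝ | w none ≠ 0} :=
    isOpen_ne_fun (continuous_apply none) continuous_const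
  have hcont : ContinuousAt dehom u :=
    continuousAt_pi.mpr fun j => (continuous_apply _).continuousAt.div
      (continuous_apply _).continuousAt one_ne_zero
  have hx' : dehom u = x := by ext j; simp [dehom, u]
  rw [← hx']
  refine closure_mono ?_ (mem_closure_image hcont (hopen.inter_closure ⟨one_ne_zero, hu⟩))
  rintro _ ⟨_, ⟨hne, q, hq, rfl⟩, rfl⟩
  have hq0 : q none ≠ 0 := by simpa using hne
  refine ⟨fun j => q (some j) / q none, fun k => ?_, by ext j; simp [dehom]⟩
  have hrow : c k * q none + ∑ j, a k j * q (some j) = 0 := by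
    simpa [r, Fintype.sum_option] using hq k
  calc c k + ∑ j, a k j * (q (some j) / q none)
      = (c k * q none + ∑ j, a k j * q (some j)) / q none := by
        simp only [add_div, mul_div_cancel_right₀ _ hq0, Finset.sum_div, mul_div_assoc]
    _ = 0 := by rw [hrow, zero_div]

variable {Q : κ → MvPolynomial ι ℚ}

theorem mem_closure_ratCast_image_zeros (hQ : ∀ k, (Q k).totalDegree ≤ 1) (x : ι → ℝ) :
    x ∈ closure ((fun q j => (q j : ℝ)) ''
      {q : ι → ℚ | ∀ k, aeval x (Q k) = 0 → aeval (fun j => (q j : ℝ)) (Q k) = 0}) := by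
  let κ₀ := {k // aeval x (Q k) = 0}
  have key := mem_closure_ratCast_image_affine (fun k : κ₀ => coeff 0 (Q k))
    (fun k j => coeff (Finsupp.single j 1) (Q k)) x fun k => by
      simpa [aeval_eq_of_totalDegree_le_one (hQ k)] using k.2
  refine closure_mono (Set.image_mono fun q hq k hk => ?_) key
  rw [aeval_eq_of_totalDegree_le_one (hQ k)]
  simp only [eq_ratCast]
  exact_mod_cast hq ⟨k, hk⟩

theorem exists_ratCast_sign_aeval_eq [Finite κ] (hQ : ∀ k, (Q k).totalDegree ≤ 1)
    (x : ι → ℝ) : ∃ q : ι → ℚ, ∀ k,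
      SignType.sign (aeval (fun j => (q j : ℝ)) (Q k)) = SignType.sign (aeval x (Q k)) := by
  have hsign : ∀ᶠ z in 𝓝 x, ∀ k, aeval x (Q k) ≠ 0 →
      SignType.sign (aeval z (Q k)) = SignType.sign (aeval x (Q k)) :=
    Filter.eventually_all.mpr fun k => by
      by_cases hk : aeval x (Q k) = 0
      · exact .of_forall fun _ h => absurd hk h
      · have hcont : Continuous fun z : ι → ℝ => aeval z (Q k) := by
          simpa only [eval_map, ← aeval_def] using
            continuous_eval (map (algebraMap ℚ ℝ) (Q k))
        exact (hcont.continuousAt.eventually_sign_eq hk).mono fun _ h _ => h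
  obtain ⟨_, ⟨q, hq, rfl⟩, hq'⟩ :=
    ((mem_closure_iff_frequently.mp (mem_closure_ratCast_image_zeros hQ x)).and_eventually
      hsign).exists
  refine ⟨q, fun k => ?_⟩
  by_cases hk : aeval x (Q k) = 0
  · rw [hk, hq k hk]
  · exact hq' k hk

end RationalPoints

theorem hasDerivAt_eval_update {𝕜 σ : Type*} [NontriviallyNormedField 𝕜] [DecidableEq σ]
    (p : MvPolynomial σ 𝕜) (x : σ → 𝕜) (i : σ) (t : 𝕜) :
    HasDerivAt (fun s => eval (Function.update x i s) p)
      (eval (Function.update x i t) (pderiv i p)) t := by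
  induction p using MvPolynomial.induction_on with
  | C a => simpa using hasDerivAt_const t a
  | add p q hp hq => simp only [map_add]; exact hp.add hq
  | mul_X p j hp =>
    rcases eq_or_ne j i with rfl | hij
    · simp only [map_mul, eval_X, Function.update_self, pderiv_mul, pderiv_X_self, map_add,
        mul_one]
      exact (hp.mul (hasDerivAt_id t)).congr_deriv (by simp [add_comm])
    · simp only [map_mul, eval_X, Function.update_of_ne hij, pderiv_mul, pderiv_X_of_ne hij,
        mul_zero, add_zero]
      exact hp.mul_const (x j)

theorem IsMinOn.zero_le_sub_mul_of_hasDerivWithinAt {f : ℝ → ℝ} {f' c y : ℝ} {s : Set ℝ}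
    (hmin : IsMinOn f s c) (hs : Convex ℝ s) (hc : c ∈ s) (hy : y ∈ s)
    (hf : HasDerivWithinAt f f' s c) : 0 ≤ (y - c) * f' := by
  simpa [mul_comm] using hmin.localize.hasFDerivWithinAt_nonneg hf.hasFDerivWithinAt
    (sub_mem_posTangentConeAt_of_segment_subset (hs.segment_subset hc hy))

theorem isKKTPt_of_isMinOn {n : ℕ} {P : MvPolynomial (Fin n) ℝ} {x : Fin n → ℝ}
    (hx : x ∈ Set.univ.pi fun _ => Set.Icc 0 1)
    (hmin : IsMinOn (fun z => eval z P) (Set.univ.pi fun _ => Set.Icc 0 1) x) :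
    IsKKTPt n P x := by
  refine ⟨fun i => hx i trivial, fun i => ?_⟩
  have hline : IsMinOn (fun t => eval (Function.update x i t) P) (Set.Icc 0 1) (x i) :=
    fun t ht => by
      simpa using hmin (Set.update_mem_pi_iff_of_mem hx |>.mpr fun _ => ht)
  have hderiv := hasDerivAt_eval_update P x i (x i)
  rw [Function.update_eq_self] at hderiv
  have hfirst : ∀ y ∈ Set.Icc (0 : ℝ) 1, 0 ≤ (y - x i) * eval x (pderiv i P) := fun y hy =>
    hline.zero_le_sub_mul_of_hasDerivWithinAt (convex_Icc 0 1) (hx i trivial) hy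
      hderiv.hasDerivWithinAt
  exact ⟨fun h => nonpos_of_mul_nonneg_right (hfirst 0 ⟨le_rfl, zero_le_one⟩) (by linarith),
    fun h => nonneg_of_mul_nonneg_right (hfirst 1 ⟨zero_le_one, le_rfl⟩) (by linarith)⟩

theorem exists_isKKTPt (n : ℕ) (P : MvPolynomial (Fin n) ℝ) : ∃ x, IsKKTPt n P x := by
  obtain ⟨x, hx, hmin⟩ := (isCompact_univ_pi fun _ => isCompact_Icc).exists_isMinOn
    ⟨0, fun _ _ => ⟨le_rfl, zero_le_one⟩⟩ (continuous_eval P).continuousOn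
  exact ⟨x, isKKTPt_of_isMinOn hx hmin⟩

theorem isKKTPt_iff_sign {n : ℕ} {P : MvPolynomial (Fin n) ℝ} {z : Fin n → ℝ} :
    IsKKTPt n P z ↔ ∀ i,
      (0 ≤ SignType.sign (z i) ∧ SignType.sign (z i - 1) ≤ 0) ∧
      (SignType.sign (z i) = 1 → SignType.sign (eval z (pderiv i P)) ≤ 0) ∧
      (SignType.sign (z i - 1) = -1 → 0 ≤ SignType.sign (eval z (pderiv i P))) := by
  simp only [sign_nonneg_iff, sign_nonpos_iff, sign_eq_one_iff, sign_eq_neg_one_iff, sub_nonpos,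
    sub_neg, IsKKTPt, Set.mem_Icc, forall_and]

theorem IsKKTPt.of_sign_eq {n : ℕ} {P : MvPolynomial (Fin n) ℝ} {x z : Fin n → ℝ}
    (hx : IsKKTPt n P x)
    (hz : ∀ i, SignType.sign (z i) = SignType.sign (x i) ∧
      SignType.sign (z i - 1) = SignType.sign (x i - 1) ∧
      SignType.sign (eval z (pderiv i P)) = SignType.sign (eval x (pderiv i P))) :
    IsKKTPt n P z := by
  rw [isKKTPt_iff_sign] at hx ⊢
  intro i
  obtain ⟨h0, h1, hg⟩ := hz i
  rw [h0, h1, hg]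
  exact hx i

/-- Existence of rational KKT points for quadratic programs over the box. -/
theorem exists_rational_KKT (n : ℕ) (P : MvPolynomial (Fin n) ℝ)
    (hdeg : P.totalDegree ≤ 2)
    (hrat : ∀ m, ∃ q : ℚ, P.coeff m = (q : ℝ)) :
    ∃ x : Fin n → ℝ, IsKKTPt n P x ∧ ∀ i, ∃ q : ℚ, x i = (q : ℝ) := by
  obtain ⟨P₀, rfl⟩ : P ∈ Set.range (map (algebraMap ℚ ℝ)) :=
    mem_range_map_iff_coeffs_subset.mpr fun a ha => by
      obtain ⟨m, -, rfl⟩ := mem_coeffs_iff.mp ha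
      obtain ⟨q, hq⟩ := hrat m
      exact ⟨q, hq.symm⟩
  rw [totalDegree_map_of_injective (algebraMap ℚ ℝ).injective] at hdeg
  obtain ⟨x, hx⟩ := exists_isKKTPt n (map (algebraMap ℚ ℝ) P₀)
  let Q : Fin n ⊕ Fin n ⊕ Fin n → MvPolynomial (Fin n) ℚ :=
    Sum.elim X (Sum.elim (fun i => X i - 1) fun i => pderiv i P₀)
  have hQ : ∀ k, (Q k).totalDegree ≤ 1 := by
    rintro (i | i | i)
    · exact (totalDegree_X i).le
    · exact (totalDegree_sub_C_le _ _).trans (totalDegree_X i).le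
    · exact (totalDegree_pderiv_le i P₀).trans (by omega)
  obtain ⟨q, hq⟩ := exists_ratCast_sign_aeval_eq hQ x
  refine ⟨_, hx.of_sign_eq fun i => ?_, fun i => ⟨q i, rfl⟩⟩
  simpa [Q, pderiv_map, eval_map, aeval_def] using
    And.intro (hq (.inl i)) (And.intro (hq (.inr (.inl i))) (hq (.inr (.inr i))))
end
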